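/- For a binary random variable X and finite-alphabet random variable Y, the squared Bhattacharyya parameter lower-bounds the conditional entropy: Z(X|Y)² ≤ H(X|Y), where H is measured in bits. -/

import Mathlib

noncomputable section

open Classical Finset Real in
/-- Probability of an event under pmf `p`. -/
noncomputable def pr {Ω : Type*} [Fintype Ω] (p : Ω → ℝ) (E : Ω → Prop) : ℝ :=
  ∑ ω, if E ω then p ω else 0

def IsPMF {Ω : Type*} [Fintype Ω] (p : Ω → ℝ) : Prop :=
  (∀ ω, 0 ≤ p ω) ∧ ∑ ω, p ω = 1

/-- Distribution of a random variable `X`. -/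
noncomputable def pdist {Ω : Type*} [Fintype Ω] (p : Ω → ℝ) {α : Type*} (X : Ω → α)
    (x : α) : ℝ :=
  pr p fun ω => X ω = x

/-- Shannon entropy (in bits) of `X`. -/
noncomputable def ent {Ω : Type*} [Fintype Ω] (p : Ω → ℝ) {α : Type*} [Fintype α]
    (X : Ω → α) : ℝ :=
  -∑ x, pdist p X x * Real.logb 2 (pdist p X x)

/-- Conditional entropy `H(X|Y)` (in bits). -/
noncomputable def condEnt {Ω : Type*} [Fintype Ω] (p : Ω → ℝ) {α β : Type*} [Fintype α]
    [Fintype β] (X : Ω → α) (Y : Ω → β) : ℝ :=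
  ent p (fun ω => (X ω, Y ω)) - ent p Y

/-- Mutual information `I(X;Y)` (in bits). -/
noncomputable def mi {Ω : Type*} [Fintype Ω] (p : Ω → ℝ) {α β : Type*} [Fintype α]
    [Fintype β] (X : Ω → α) (Y : Ω → β) : ℝ :=
  ent p X + ent p Y - ent p (fun ω => (X ω, Y ω))

/-- Conditional mutual information `I(X;Y|W)` (in bits). -/
noncomputable def cmi {Ω : Type*} [Fintype Ω] (p : Ω → ℝ) {α β γ : Type*} [Fintype α]
    [Fintype β] [Fintype γ] (X : Ω → α) (Y : Ω → β) (W : Ω → γ) : ℝ :=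
  condEnt p X W + condEnt p Y W - condEnt p (fun ω => (X ω, Y ω)) W

/-- Bhattacharyya parameter `Z(X|Y)` for a binary `X` given `Y`.
Terms with `p_Y(y) = 0` contribute `0` (division by zero yields `0`). -/
noncomputable def bhat {Ω : Type*} [Fintype Ω] (p : Ω → ℝ) {β : Type*} [Fintype β]
    (X : Ω → Bool) (Y : Ω → β) : ℝ :=
  2 * ∑ y, pdist p Y y *
    Real.sqrt (((pr p fun ω => X ω = false ∧ Y ω = y) / pdist p Y y) *
      ((pr p fun ω => X ω = true ∧ Y ω = y) / pdist p Y y))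

/-- Binary entropy function (in bits). -/
noncomputable def Hb (x : ℝ) : ℝ :=
  -x * Real.logb 2 x - (1 - x) * Real.logb 2 (1 - x)

end

/-!
Write `q y = p_Y(y)` and `s y = p_{X|Y}(0|y)`. Then `Z(X|Y) = ∑ q y · 2 √(s y (1 - s y))` and, in
nats, `H(X|Y) · log 2 = ∑ q y · binEntropy (s y)`. Jensen's inequality for `t ↦ t²` with weights `q`
gives `Z² ≤ ∑ q y · 4 s y (1 - s y)`, so it suffices that `4 log 2 · s (1 - s) ≤ binEntropy s`.

With `x = 1 - 2 s` this says `0 ≤ entropyGap x`, where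
`entropyGap x = 2 log 2 · x² + negMulLog (1 + x) + negMulLog (1 - x)` is even, vanishes with its
derivative at `0`, vanishes at `1`, and has second derivative `4 log 2 - 2 / (1 - x²)`. On `[0, 1]`
that second derivative changes sign once, at `x₀ = √(1 - 1 / (2 log 2))`: on `[0, x₀]` the function
is convex, hence above its horizontal tangent at `0`; on `[x₀, 1]` it is concave, hence above the
chord joining its nonnegative values at `x₀` and `1`.
-/

open Real Set Finset

lemma negMulLog_add_negMulLog (a b : ℝ) :
    negMulLog a + negMulLog b = negMulLog (a + b) + (a + b) * binEntropy (a / (a + b)) := by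
  rcases eq_or_ne (a + b) 0 with h | h
  · obtain rfl : b = -a := by linarith
    simp [negMulLog]
  · calc negMulLog a + negMulLog b
        = negMulLog ((a + b) * (a / (a + b))) + negMulLog ((a + b) * (1 - a / (a + b))) := by
          congr 2
          · field_simp
          · field_simp; ring
      _ = _ := by
          rw [negMulLog_mul, negMulLog_mul, binEntropy_eq_negMulLog_add_negMulLog_one_sub]
          ring

section EntropyGap

noncomputable def entropyGap (x : ℝ) : ℝ :=
  2 * log 2 * x ^ 2 + negMulLog (1 + x) + negMulLog (1 - x)

lemma entropyGap_one_sub_two_mul (s : ℝ) :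
    entropyGap (1 - 2 * s) = 2 * (binEntropy s - 4 * log 2 * (s * (1 - s))) := by
  rw [entropyGap, show 1 + (1 - 2 * s) = 2 * (1 - s) by ring,
    show 1 - (1 - 2 * s) = 2 * s by ring, negMulLog_mul, negMulLog_mul,
    binEntropy_eq_negMulLog_add_negMulLog_one_sub, negMulLog]
  ring

lemma entropyGap_neg (x : ℝ) : entropyGap (-x) = entropyGap x := by
  simp only [entropyGap, neg_sq, ← sub_eq_add_neg, sub_neg_eq_add]
  ring

lemma entropyGap_zero : entropyGap 0 = 0 := by simp [entropyGap]

lemma entropyGap_one : entropyGap 1 = 0 := by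
  norm_num [entropyGap, negMulLog]

lemma hasDerivAt_entropyGap {x : ℝ} (hx : x ∈ Ioo (-1 : ℝ) 1) :
    HasDerivAt entropyGap (4 * log 2 * x - log (1 + x) + log (1 - x)) x := by
  have h₁ := (hasDerivAt_negMulLog (by linarith [hx.1] : 1 + x ≠ 0)).comp x
    ((hasDerivAt_id x).const_add 1)
  have h₂ := (hasDerivAt_negMulLog (by linarith [hx.2] : 1 - x ≠ 0)).comp x
    ((hasDerivAt_id x).const_sub 1)
  exact ((((hasDerivAt_pow 2 x).const_mul (2 * log 2)).add h₁).add h₂).congr_deriv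
    (by push_cast; ring)

lemma hasDerivAt_deriv_entropyGap {x : ℝ} (hx : x ∈ Ioo (-1 : ℝ) 1) :
    HasDerivAt (fun x => 4 * log 2 * x - log (1 + x) + log (1 - x))
      (4 * log 2 - 2 / (1 - x ^ 2)) x := by
  have h₁ : 0 < 1 + x := by linarith [hx.1]
  have h₂ : 0 < 1 - x := by linarith [hx.2]
  have := (((hasDerivAt_id x).const_mul (4 * log 2)).sub
    (((hasDerivAt_id x).const_add 1).log h₁.ne')).add (((hasDerivAt_id x).const_sub 1).log h₂.ne')
  refine this.congr_deriv ?_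
  rw [id, show 1 - x ^ 2 = (1 + x) * (1 - x) by ring]
  field_simp
  ring

lemma continuous_entropyGap : Continuous entropyGap := by
  unfold entropyGap
  fun_prop

noncomputable def entropyGapInflection : ℝ := √(1 - (2 * log 2)⁻¹)

local notation "x₀" => entropyGapInflection

lemma entropyGapInflection_nonneg : 0 ≤ x₀ := sqrt_nonneg _

lemma entropyGapInflection_le_one : x₀ ≤ 1 :=
  sqrt_le_one.2 (sub_le_self _ (by positivity))

lemma entropyGapInflection_sq : x₀ ^ 2 = 1 - (2 * log 2)⁻¹ := by
  refine sq_sqrt (sub_nonneg.2 (inv_le_one_of_one_le₀ ?_))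
  linarith [log_two_gt_d9]

lemma deriv2_entropyGap_nonneg_iff {x : ℝ} (hx : x ∈ Ioo (-1 : ℝ) 1) :
    0 ≤ 4 * log 2 - 2 / (1 - x ^ 2) ↔ x ^ 2 ≤ x₀ ^ 2 := by
  have h₁ : 0 < 1 - x ^ 2 := by nlinarith [hx.1, hx.2]
  have h₂ : 0 < 2 * log 2 := by positivity
  rw [entropyGapInflection_sq, sub_nonneg, div_le_iff₀ h₁, le_sub_comm, inv_le_iff_one_le_mul₀ h₂]
  constructor <;> intro h <;> linarith

lemma convexOn_entropyGap : ConvexOn ℝ (Icc 0 x₀) entropyGap := by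
  have hmem : ∀ x ∈ interior (Icc 0 x₀), x ∈ Ioo (-1 : ℝ) 1 := fun x hx => by
    rw [interior_Icc] at hx
    exact ⟨by linarith [hx.1], by linarith [hx.2, entropyGapInflection_le_one]⟩
  refine convexOn_of_hasDerivWithinAt2_nonneg (convex_Icc _ _)
    continuous_entropyGap.continuousOn
    (fun x hx => (hasDerivAt_entropyGap (hmem x hx)).hasDerivWithinAt)
    (fun x hx => (hasDerivAt_deriv_entropyGap (hmem x hx)).hasDerivWithinAt) fun x hx => ?_
  rw [deriv2_entropyGap_nonneg_iff (hmem x hx)]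
  rw [interior_Icc] at hx
  exact pow_le_pow_left₀ hx.1.le hx.2.le 2

lemma concaveOn_entropyGap : ConcaveOn ℝ (Icc x₀ 1) entropyGap := by
  have hmem : ∀ x ∈ interior (Icc x₀ 1), x ∈ Ioo (-1 : ℝ) 1 := fun x hx => by
    rw [interior_Icc] at hx
    exact ⟨by linarith [hx.1, entropyGapInflection_nonneg], hx.2⟩
  refine concaveOn_of_hasDerivWithinAt2_nonpos (convex_Icc _ _)
    continuous_entropyGap.continuousOn
    (fun x hx => (hasDerivAt_entropyGap (hmem x hx)).hasDerivWithinAt)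
    (fun x hx => (hasDerivAt_deriv_entropyGap (hmem x hx)).hasDerivWithinAt) fun x hx => ?_
  refine le_of_not_ge fun h => ?_
  rw [deriv2_entropyGap_nonneg_iff (hmem x hx)] at h
  rw [interior_Icc] at hx
  exact (pow_lt_pow_left₀ hx.1 entropyGapInflection_nonneg two_ne_zero).not_ge h

lemma entropyGap_nonneg_of_le_inflection {x : ℝ} (hx : x ∈ Icc 0 x₀) : 0 ≤ entropyGap x := by
  rcases hx.1.eq_or_lt with rfl | hpos
  · exact entropyGap_zero.ge
  have := convexOn_entropyGap.le_slope_of_hasDerivAt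
    (left_mem_Icc.2 entropyGapInflection_nonneg) hx hpos
    (hasDerivAt_entropyGap ⟨by norm_num, by norm_num⟩)
  simp only [mul_zero, add_zero, sub_zero, log_one, sub_self, slope_def_field,
    entropyGap_zero] at this
  simpa [hpos.ne'] using mul_nonneg this hpos.le

lemma entropyGap_nonneg {x : ℝ} (hx : |x| ≤ 1) : 0 ≤ entropyGap x := by
  wlog h₀ : 0 ≤ x generalizing x
  · rw [← entropyGap_neg]
    exact this (by rwa [abs_neg]) (by linarith)
  rcases le_total x x₀ with h | h
  · exact entropyGap_nonneg_of_le_inflection ⟨h₀, h⟩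
  · have hmin := concaveOn_entropyGap.min_le_of_mem_Icc
      (left_mem_Icc.2 entropyGapInflection_le_one) (right_mem_Icc.2 entropyGapInflection_le_one)
      ⟨h, (abs_le.1 hx).2⟩
    rw [entropyGap_one] at hmin
    exact (le_min (entropyGap_nonneg_of_le_inflection
      (right_mem_Icc.2 entropyGapInflection_nonneg)) le_rfl).trans hmin

lemma four_mul_log_two_mul_le_binEntropy {s : ℝ} (hs : s ∈ Icc (0 : ℝ) 1) :
    4 * log 2 * (s * (1 - s)) ≤ binEntropy s := by
  have := entropyGap_nonneg (x := 1 - 2 * s) (abs_le.2 ⟨by linarith [hs.2], by linarith [hs.1]⟩)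
  rw [entropyGap_one_sub_two_mul] at this
  linarith

end EntropyGap

section Probability

variable {Ω β : Type*} [Fintype Ω] (p : Ω → ℝ)

noncomputable def condPr (E : Ω → Prop) (Y : Ω → β) (y : β) : ℝ :=
  pr p (fun ω => E ω ∧ Y ω = y) / pdist p Y y

variable {p}

lemma pr_nonneg (hp : ∀ ω, 0 ≤ p ω) (E : Ω → Prop) : 0 ≤ pr p E :=
  sum_nonneg fun ω _ => by split_ifs <;> simp [hp ω]

lemma pr_mono (hp : ∀ ω, 0 ≤ p ω) {E F : Ω → Prop} (h : ∀ ω, E ω → F ω) : pr p E ≤ pr p F :=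
  sum_le_sum fun ω _ => by split_ifs <;> simp_all

lemma condPr_mem_Icc (hp : ∀ ω, 0 ≤ p ω) (E : Ω → Prop) (Y : Ω → β) (y : β) :
    condPr p E Y y ∈ Set.Icc 0 1 :=
  ⟨div_nonneg (pr_nonneg hp _) (pr_nonneg hp _),
    div_le_one_of_le₀ (pr_mono hp fun _ h => h.2) (pr_nonneg hp _)⟩

lemma sum_pdist [Fintype β] (hp : ∑ ω, p ω = 1) (Y : Ω → β) : ∑ y, pdist p Y y = 1 := by
  classical
  unfold pdist pr
  rw [sum_comm, ← hp]
  exact sum_congr rfl fun ω _ => by simp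

lemma pdist_eq_pr_false_add_pr_true (X : Ω → Bool) (Y : Ω → β) (y : β) :
    pdist p Y y =
      pr p (fun ω => X ω = false ∧ Y ω = y) + pr p (fun ω => X ω = true ∧ Y ω = y) := by
  simp only [pdist, pr, ← sum_add_distrib]
  refine sum_congr rfl fun ω _ => ?_
  split_ifs <;> simp_all

lemma pdist_prodMk {α : Type*} (X : Ω → α) (Y : Ω → β) (x : α) (y : β) :
    pdist p (fun ω => (X ω, Y ω)) (x, y) = pr p (fun ω => X ω = x ∧ Y ω = y) := by
  simp [pdist]

lemma ent_eq_sum_negMulLog {α : Type*} [Fintype α] (X : Ω → α) :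
    ent p X = (∑ x, negMulLog (pdist p X x)) / log 2 := by
  simp only [ent, negMulLog, logb, sum_div, ← sum_neg_distrib]
  exact sum_congr rfl fun _ _ => by ring

variable [Fintype β] (X : Ω → Bool) (Y : Ω → β)

lemma condEnt_eq_sum_binEntropy :
    condEnt p X Y =
      (∑ y, pdist p Y y * binEntropy (condPr p (fun ω => X ω = false) Y y)) / log 2 := by
  rw [condEnt, ent_eq_sum_negMulLog, ent_eq_sum_negMulLog, ← sub_div, Fintype.sum_prod_type_right,
    ← sum_sub_distrib]
  congr 1
  refine sum_congr rfl fun y _ => ?_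
  rw [Fintype.sum_bool, pdist_prodMk, pdist_prodMk, add_comm, negMulLog_add_negMulLog,
    ← pdist_eq_pr_false_add_pr_true, condPr]
  ring

lemma bhat_eq_sum_condPr :
    bhat p X Y = ∑ y, pdist p Y y *
      (2 * √(condPr p (fun ω => X ω = false) Y y * (1 - condPr p (fun ω => X ω = false) Y y))) := by
  rw [bhat, mul_sum]
  refine sum_congr rfl fun y _ => ?_
  rcases eq_or_ne (pdist p Y y) 0 with hy | hy
  · simp [hy]
  · rw [condPr, one_sub_div hy, pdist_eq_pr_false_add_pr_true X Y y, add_sub_cancel_left,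
      ← pdist_eq_pr_false_add_pr_true X Y y]
    ring

end Probability

/-- `Z(X|Y)² ≤ H(X|Y)` (entropy in bits). -/
theorem bhat_sq_le_condEnt {Ω β : Type*} [Fintype Ω] [Fintype β]
    (p : Ω → ℝ) (hp : IsPMF p) (X : Ω → Bool) (Y : Ω → β) :
    (bhat p X Y) ^ 2 ≤ condEnt p X Y := by
  obtain ⟨hp₀, hp₁⟩ := hp
  set s := condPr p (fun ω => X ω = false) Y
  have hs : ∀ y, s y ∈ Set.Icc 0 1 := condPr_mem_Icc hp₀ _ Y
  have hq : ∀ y, 0 ≤ pdist p Y y := fun y => pr_nonneg hp₀ _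
  rw [bhat_eq_sum_condPr, condEnt_eq_sum_binEntropy, le_div_iff₀ (by positivity)]
  calc (∑ y, pdist p Y y * (2 * √(s y * (1 - s y)))) ^ 2 * log 2
      ≤ (∑ y, pdist p Y y * (2 * √(s y * (1 - s y))) ^ 2) * log 2 := by
        gcongr
        exact (even_two.convexOn_pow).map_sum_le (fun y _ => hq y) (sum_pdist hp₁ Y)
          fun _ _ => mem_univ _
    _ = ∑ y, pdist p Y y * (4 * log 2 * (s y * (1 - s y))) := by
        rw [sum_mul]
        refine sum_congr rfl fun y _ => ?_
        rw [mul_pow, sq_sqrt (mul_nonneg (hs y).1 (sub_nonneg.2 (hs y).2))]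
        ring
    _ ≤ ∑ y, pdist p Y y * binEntropy (s y) :=
        sum_le_sum fun y _ =>
          mul_le_mul_of_nonneg_left (four_mul_log_two_mul_le_binEntropy (hs y)) (hq y)
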